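/- arXiv:1404.2699 — 3 statements merged into one kernel-verified Lean document; each statement's English description precedes it below -/
import Mathlib

section
/- Let F(s) = Σ_{n≥1} f(n) n^{-s} be a nondegenerate ordinary Dirichlet series with f(n) ≥ 0, convergent for Re(s) ≥ s₀. Let N < M be the two minimal indices of nonzero coefficients, with N > 1, and set α = log M / log N. Then there exist constants c₂ > 0 and K₂ ≥ s₀ such that for all real s ≥ K₂: 0 < 1/N − c₂/N^{(α−1)s} ≤ F(s+1)/F(s) < 1/N. -/
/-!
Every index `n` with `f n ≠ 0` satisfies `n ≥ N`, so termwise `f n n^{-(s+1)} ≤ f n n^{-s} / N`,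
strictly at `n = M`; this gives `F (s + 1) < F s / N`. Below `M` the only nonzero term is
`n = N`, where this is an equality, so `F s / N - F (s + 1)` is at most `T s / N`, where `T` is
the tail `∑_{n ≥ M}`. The tail decays like `M^{-s}` while `F s ≥ f N N^{-s}`, so
`T s / (N F s) = O((N / M)^s) = O(N^{-(α - 1) s})`.
-/

open Real Filter Topology

noncomputable def dirichletTerm (f : ℕ → ℝ) (s : ℝ) (m : ℕ) : ℝ :=
  f (m + 1) / ((m + 1 : ℕ) : ℝ) ^ s

noncomputable def dirichletTail (f : ℕ → ℝ) (M : ℕ) (s : ℝ) : ℕ → ℝ :=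
  {m | M ≤ m + 1}.indicator (dirichletTerm f s)

section

variable {f : ℕ → ℝ} {N M : ℕ}

lemma dirichletTerm_nonneg (hf : ∀ n, 0 ≤ f n) (s : ℝ) (m : ℕ) : 0 ≤ dirichletTerm f s m :=
  div_nonneg (hf _) (rpow_nonneg (Nat.cast_nonneg _) s)

lemma dirichletTerm_add_one (s : ℝ) (m : ℕ) :
    dirichletTerm f (s + 1) m = dirichletTerm f s m / ((m + 1 : ℕ) : ℝ) := by
  rw [dirichletTerm, dirichletTerm, rpow_add_one (by positivity), div_div]

lemma dirichletTerm_eq_mul_rpow (s₀ s : ℝ) (m : ℕ) :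
    dirichletTerm f s m = dirichletTerm f s₀ m * ((m + 1 : ℕ) : ℝ) ^ (s₀ - s) := by
  have hpos : (0 : ℝ) < ((m + 1 : ℕ) : ℝ) := by positivity
  rw [dirichletTerm, dirichletTerm, rpow_sub hpos]
  field_simp

lemma dirichletTail_apply (s : ℝ) (m : ℕ) :
    dirichletTail f M s m = if M ≤ m + 1 then dirichletTerm f s m else 0 :=
  Set.indicator_apply _ _ _

lemma dirichletTail_nonneg (hf : ∀ n, 0 ≤ f n) (s : ℝ) (m : ℕ) : 0 ≤ dirichletTail f M s m :=
  Set.indicator_nonneg (fun m _ => dirichletTerm_nonneg hf s m) m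

lemma dirichletTerm_add_one_le (hf : ∀ n, 0 ≤ f n) (hN : 0 < N)
    (hminN : ∀ m : ℕ, 1 ≤ m → m < N → f m = 0) (s : ℝ) (m : ℕ) :
    dirichletTerm f (s + 1) m ≤ dirichletTerm f s m / N := by
  obtain hm | hm := eq_or_ne (f (m + 1)) 0
  · simp [dirichletTerm, hm]
  have hNm : N ≤ m + 1 := by
    by_contra! hlt
    exact hm (hminN _ m.succ_pos hlt)
  rw [dirichletTerm_add_one]
  exact div_le_div_of_nonneg_left (dirichletTerm_nonneg hf s m) (by exact_mod_cast hN)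
    (by exact_mod_cast hNm)

lemma dirichletTerm_pred_pos (hf : ∀ n, 0 ≤ f n) (hM : 0 < M) (hfM : f M ≠ 0) (s : ℝ) :
    0 < dirichletTerm f s (M - 1) := by
  rw [dirichletTerm, Nat.sub_add_cancel hM]
  exact div_pos ((hf M).lt_of_ne' hfM) (rpow_pos_of_pos (by exact_mod_cast hM) s)

lemma dirichletTerm_add_one_lt (hf : ∀ n, 0 ≤ f n) (hN : 0 < N) (hNM : N < M) (hfM : f M ≠ 0)
    (s : ℝ) : dirichletTerm f (s + 1) (M - 1) < dirichletTerm f s (M - 1) / N := by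
  rw [dirichletTerm_add_one, Nat.sub_add_cancel (hN.trans hNM)]
  exact div_lt_div_of_pos_left (dirichletTerm_pred_pos hf (hN.trans hNM) hfM s)
    (by exact_mod_cast hN) (by exact_mod_cast hNM)

lemma dirichletTerm_div_sub_tail_le (hf : ∀ n, 0 ≤ f n)
    (hminN : ∀ m : ℕ, 1 ≤ m → m < N → f m = 0) (hminM : ∀ m : ℕ, N < m → m < M → f m = 0)
    (s : ℝ) (m : ℕ) :
    dirichletTerm f s m / N - dirichletTail f M s m / N ≤ dirichletTerm f (s + 1) m := by
  rw [dirichletTail_apply]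
  split_ifs with hMm
  · simpa using dirichletTerm_nonneg hf (s + 1) m
  obtain hm | hm := eq_or_ne (f (m + 1)) 0
  · simp [dirichletTerm, hm]
  -- below `M`, only the term `n = N` survives
  have hmN : m + 1 = N := by
    by_contra hne
    rcases Nat.lt_or_gt_of_ne hne with hlt | hgt
    · exact hm (hminN _ m.succ_pos hlt)
    · exact hm (hminM _ hgt (by omega))
  simp [dirichletTerm_add_one, hmN]

lemma dirichletTail_le_mul_rpow (hf : ∀ n, 0 ≤ f n) (hM : 0 < M) {s₀ s : ℝ}
    (hs : s₀ ≤ s) (m : ℕ) :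
    dirichletTail f M s m ≤ dirichletTail f M s₀ m * (M : ℝ) ^ (s₀ - s) := by
  rw [dirichletTail_apply, dirichletTail_apply]
  split_ifs with hMm
  · rw [dirichletTerm_eq_mul_rpow s₀ s m]
    exact mul_le_mul_of_nonneg_left (rpow_le_rpow_of_nonpos (by exact_mod_cast hM)
      (by exact_mod_cast hMm) (sub_nonpos.2 hs)) (dirichletTerm_nonneg hf s₀ m)
  · simp

lemma tsum_dirichletTail_pos (hf : ∀ n, 0 ≤ f n) (hM : 0 < M) (hfM : f M ≠ 0) {s : ℝ}
    (hs : Summable (dirichletTerm f s)) : 0 < ∑' m, dirichletTail f M s m := by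
  have hsum : Summable (dirichletTail f M s) := hs.indicator _
  refine hsum.tsum_pos (dirichletTail_nonneg hf s) (M - 1) ?_
  rw [dirichletTail_apply, if_pos (by omega)]
  exact dirichletTerm_pred_pos hf hM hfM s

lemma tsum_dirichletTerm_div_lt (hf : ∀ n, 0 ≤ f n) (hN : 0 < N) (hNM : N < M)
    (hfM : f M ≠ 0) (hminN : ∀ m : ℕ, 1 ≤ m → m < N → f m = 0) {s : ℝ}
    (hs : Summable (dirichletTerm f s)) (hs₁ : Summable (dirichletTerm f (s + 1))) :
    (∑' m, dirichletTerm f (s + 1) m) / ∑' m, dirichletTerm f s m < 1 / N := by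
  have hlt : ∑' m, dirichletTerm f (s + 1) m < (∑' m, dirichletTerm f s m) / N := by
    rw [← tsum_div_const]
    exact Summable.tsum_lt_tsum (dirichletTerm_add_one_le hf hN hminN s)
      (dirichletTerm_add_one_lt hf hN hNM hfM s) hs₁ (hs.div_const _)
  have hF : 0 < ∑' m, dirichletTerm f s m :=
    (div_pos_iff_of_pos_right (by exact_mod_cast hN)).1
      ((tsum_nonneg (dirichletTerm_nonneg hf (s + 1))).trans_lt hlt)
  rwa [div_lt_iff₀ hF, one_div_mul_eq_div]

lemma tsum_dirichletTerm_div_sub_tail_le (hf : ∀ n, 0 ≤ f n)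
    (hminN : ∀ m : ℕ, 1 ≤ m → m < N → f m = 0) (hminM : ∀ m : ℕ, N < m → m < M → f m = 0)
    {s : ℝ} (hs : Summable (dirichletTerm f s)) (hs₁ : Summable (dirichletTerm f (s + 1))) :
    (∑' m, dirichletTerm f s m) / N - (∑' m, dirichletTail f M s m) / N ≤
      ∑' m, dirichletTerm f (s + 1) m := by
  have hsN := hs.div_const (N : ℝ)
  have htN : Summable fun m => dirichletTail f M s m / N :=
    (hs.indicator {m | M ≤ m + 1}).div_const (N : ℝ)
  rw [← tsum_div_const, ← tsum_div_const, ← hsN.tsum_sub htN]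
  exact (hsN.sub htN).tsum_le_tsum (dirichletTerm_div_sub_tail_le hf hminN hminM s) hs₁

lemma tsum_dirichletTail_le_mul_rpow (hf : ∀ n, 0 ≤ f n) (hM : 0 < M) {s₀ s : ℝ}
    (hs : s₀ ≤ s) (hs₀ : Summable (dirichletTerm f s₀)) (hsum : Summable (dirichletTerm f s)) :
    ∑' m, dirichletTail f M s m ≤ (∑' m, dirichletTail f M s₀ m) * (M : ℝ) ^ (s₀ - s) := by
  rw [← tsum_mul_right]
  exact (hsum.indicator _).tsum_le_tsum (dirichletTail_le_mul_rpow hf hM hs)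
    ((hs₀.indicator _).mul_right _)

lemma div_rpow_le_tsum_dirichletTerm (hf : ∀ n, 0 ≤ f n) (hN : 0 < N) {s : ℝ}
    (hs : Summable (dirichletTerm f s)) : f N / (N : ℝ) ^ s ≤ ∑' m, dirichletTerm f s m := by
  have h := hs.le_tsum (N - 1) fun m _ => dirichletTerm_nonneg hf s m
  rwa [dirichletTerm, Nat.sub_add_cancel hN] at h

lemma one_div_sub_le_tsum_dirichletTerm_div (hf : ∀ n, 0 ≤ f n) (hN : 0 < N) (hNM : N < M)
    (hfN : f N ≠ 0) (hminN : ∀ m : ℕ, 1 ≤ m → m < N → f m = 0)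
    (hminM : ∀ m : ℕ, N < m → m < M → f m = 0) {s₀ s : ℝ} (hs : s₀ ≤ s)
    (hs₀ : Summable (dirichletTerm f s₀)) (hsum : Summable (dirichletTerm f s))
    (hs₁ : Summable (dirichletTerm f (s + 1))) :
    1 / (N : ℝ) - (∑' m, dirichletTail f M s₀ m) * (M : ℝ) ^ s₀ / (N * f N) * ((N : ℝ) / M) ^ s ≤
      (∑' m, dirichletTerm f (s + 1) m) / ∑' m, dirichletTerm f s m := by
  set F := ∑' m, dirichletTerm f s m
  set c := (∑' m, dirichletTail f M s₀ m) * (M : ℝ) ^ s₀ / (N * f N) with hc_def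
  have hN' : (0 : ℝ) < N := by exact_mod_cast hN
  have hM' : (0 : ℝ) < M := by exact_mod_cast hN.trans hNM
  have hfN' : 0 < f N := (hf N).lt_of_ne' hfN
  have hF_ge := div_rpow_le_tsum_dirichletTerm hf hN hsum
  have hF : 0 < F := (div_pos hfN' (rpow_pos_of_pos hN' s)).trans_le hF_ge
  have hT := tsum_dirichletTail_le_mul_rpow hf (hN.trans hNM) hs hs₀ hsum
  have hc : 0 ≤ c * ((N : ℝ) / M) ^ s :=
    mul_nonneg (div_nonneg (mul_nonneg (tsum_nonneg (dirichletTail_nonneg hf s₀))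
      (rpow_nonneg hM'.le _)) (mul_pos hN' hfN').le) (rpow_nonneg (by positivity) _)
  have hdefect : (∑' m, dirichletTail f M s m) / N ≤ c * ((N : ℝ) / M) ^ s * F :=
    calc (∑' m, dirichletTail f M s m) / N
        ≤ (∑' m, dirichletTail f M s₀ m) * (M : ℝ) ^ (s₀ - s) / N := by gcongr
      _ = c * ((N : ℝ) / M) ^ s * (f N / (N : ℝ) ^ s) := by
        rw [hc_def, rpow_sub hM', div_rpow hN'.le hM'.le]
        field_simp
      _ ≤ c * ((N : ℝ) / M) ^ s * F := mul_le_mul_of_nonneg_left hF_ge hc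
  rw [le_div_iff₀ hF, sub_mul, one_div_mul_eq_div]
  linarith [tsum_dirichletTerm_div_sub_tail_le hf hminN hminM hsum hs₁]

end

lemma eventually_mul_rpow_lt {b c ε : ℝ} (hb₀ : 0 ≤ b) (hb₁ : b < 1) (hε : 0 < ε) :
    ∀ᶠ s : ℝ in atTop, c * b ^ s < ε := by
  have hlim : Tendsto (fun s : ℝ => c * b ^ s) atTop (𝓝 0) := by
    simpa using
      (tendsto_rpow_atTop_of_base_lt_one b (by linarith) hb₁).const_mul c
  exact hlim.eventually (gt_mem_nhds hε)

lemma rpow_log_div_log_sub_one_mul {x y : ℝ} (hx : 0 < x) (hx₁ : x ≠ 1) (hy : 0 < y) (s : ℝ) :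
    x ^ ((log y / log x - 1) * s) = (y / x) ^ s := by
  have hlog : log x ≠ 0 := log_ne_zero_of_pos_of_ne_one hx hx₁
  rw [rpow_def_of_pos hx, rpow_def_of_pos (div_pos hy hx), log_div hy.ne' hx.ne']
  congr 1
  field_simp

theorem ratio_bounds_N_gt_one_general (f : ℕ → ℝ) (s₀ : ℝ) (N M : ℕ)
    (hf : ∀ n, 0 ≤ f n)
    (hconv : ∀ s : ℝ, s₀ ≤ s → Summable (fun m : ℕ => f (m + 1) / ((m + 1 : ℕ) : ℝ) ^ s))
    (hN : 1 < N) (hNM : N < M) (hfN : f N ≠ 0) (hfM : f M ≠ 0)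
    (hminN : ∀ m : ℕ, 1 ≤ m → m < N → f m = 0)
    (hminM : ∀ m : ℕ, N < m → m < M → f m = 0)
    (F : ℝ → ℝ) (hF : ∀ s : ℝ, F s = ∑' m : ℕ, f (m + 1) / (((m + 1 : ℕ) : ℝ)) ^ s) :
    ∃ c₂ > 0, ∃ K₂ ≥ s₀, ∀ s ≥ K₂,
      0 < 1 / (N : ℝ) - c₂ / (N : ℝ) ^ ((Real.log M / Real.log N - 1) * s) ∧
        1 / (N : ℝ) - c₂ / (N : ℝ) ^ ((Real.log M / Real.log N - 1) * s) ≤ F (s + 1) / F s ∧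
          F (s + 1) / F s < 1 / (N : ℝ) := by
  have hN' : (1 : ℝ) < N := by exact_mod_cast hN
  have hM' : (0 : ℝ) < M := by exact_mod_cast (zero_lt_one.trans hN).trans hNM
  set c₂ := (∑' m, dirichletTail f M s₀ m) * (M : ℝ) ^ s₀ / (N * f N)
  have hc₂ : 0 < c₂ := by
    have := tsum_dirichletTail_pos hf (by omega) hfM (hconv s₀ le_rfl)
    have := (hf N).lt_of_ne' hfN
    positivity
  have hpow (s : ℝ) : c₂ / (N : ℝ) ^ ((log M / log N - 1) * s) = c₂ * ((N : ℝ) / M) ^ s := by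
    rw [rpow_log_div_log_sub_one_mul (by linarith) hN'.ne' hM', div_rpow (by linarith) hM'.le,
      div_rpow hM'.le (by linarith)]
    field_simp
  have hNM' : (N : ℝ) / M < 1 := (div_lt_one hM').2 (by exact_mod_cast hNM)
  have hN_inv : (0 : ℝ) < 1 / N := one_div_pos.2 (by linarith)
  obtain ⟨K, hK⟩ :=
    eventually_atTop.1 (eventually_mul_rpow_lt (c := c₂) (by positivity) hNM' hN_inv)
  refine ⟨c₂, hc₂, max s₀ K, le_max_left _ _, fun s hs => ?_⟩
  have hs₀ : s₀ ≤ s := (le_max_left _ _).trans hs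
  rw [hpow, hF, hF]
  exact ⟨sub_pos.2 (hK s ((le_max_right _ _).trans hs)),
    one_div_sub_le_tsum_dirichletTerm_div hf (by omega) hNM hfN hminN hminM hs₀
      (hconv s₀ le_rfl) (hconv s hs₀) (hconv (s + 1) (by linarith)),
    tsum_dirichletTerm_div_lt hf (by omega) hNM hfM hminN (hconv s hs₀)
      (hconv (s + 1) (by linarith))⟩

theorem ratio_bounds_N_gt_one (f : ℕ → ℝ) (s₀ : ℝ) (N M : ℕ)
    (hf : ∀ n, 0 ≤ f n)
    (hconv : ∀ s : ℝ, s₀ ≤ s → Summable (fun m : ℕ => f (m + 1) / ((m + 1 : ℕ) : ℝ) ^ s))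
    (hinf : {n : ℕ | f n ≠ 0}.Infinite)
    (hN : 1 < N) (hNM : N < M) (hfN : f N ≠ 0) (hfM : f M ≠ 0)
    (hminN : ∀ m : ℕ, 1 ≤ m → m < N → f m = 0)
    (hminM : ∀ m : ℕ, N < m → m < M → f m = 0)
    (F : ℝ → ℝ) (hF : ∀ s : ℝ, F s = ∑' m : ℕ, f (m + 1) / (((m + 1 : ℕ) : ℝ)) ^ s) :
    ∃ c₂ > 0, ∃ K₂ ≥ s₀, ∀ s ≥ K₂,
      0 < 1 / (N : ℝ) - c₂ / (N : ℝ) ^ ((Real.log M / Real.log N - 1) * s) ∧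
        1 / (N : ℝ) - c₂ / (N : ℝ) ^ ((Real.log M / Real.log N - 1) * s) ≤ F (s + 1) / F s ∧
          F (s + 1) / F s < 1 / (N : ℝ) :=
  ratio_bounds_N_gt_one_general f s₀ N M hf hconv hN hNM hfN hfM hminN hminM F hF
end

section
/- Let a, b be positive integers and suppose ζ(ak+b) = p_k/q_k is rational (coprime positive integers) for all integers k ≥ R. Then for every ε ∈ (0,1) and sufficiently large m, max_{R ≤ k ≤ m} q_k > m log(2 − ε). -/
/-!
`ζ(n) - 1 = ∑_{m ≥ 2} m⁻ⁿ` is positive and at most `4 / 2ⁿ`, by comparing `m⁻ⁿ` with the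
telescoping terms `2²⁻ⁿ (1/(m-1) - 1/m)`. A rational number `p/q > 1` exceeds `1` by at least
`1/q`, so `ζ(n) = p/q` forces `2ⁿ ≤ 4q`. Taking `k = m`, the exponent `am + b ≥ m + 1` gives
`q_m ≥ 2^(m-1) ≥ m`, and `m > m log(2 - ε)` because `1 < 2 - ε < e`.
-/

/-- Zeta values along the arithmetic progression `a k + b`. -/
noncomputable def zetaAP (a b k : ℕ) : ℝ := ∑' m : ℕ, 1 / ((m + 1 : ℕ) : ℝ) ^ (a * k + b)

open Finset

lemma one_div_pow_le_mul_sub_one_div {n : ℕ} (hn : 2 ≤ n) {x : ℝ} (hx : 2 ≤ x) :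
    1 / x ^ n ≤ 4 / 2 ^ n * (1 / (x - 1) - 1 / x) := by
  obtain ⟨k, rfl⟩ := Nat.exists_eq_add_of_le' hn
  have hx1 : 0 < x - 1 := by linarith
  have hsub : 1 / (x - 1) - 1 / x = 1 / (x * (x - 1)) := by field_simp; ring
  have hpow : 2 ^ k ≤ x ^ k := pow_le_pow_left₀ (by norm_num) hx k
  rw [hsub, div_mul_div_comm, mul_one, div_le_div_iff₀ (by positivity) (by positivity)]
  calc 1 * (2 ^ (k + 2) * (x * (x - 1))) = 4 * (2 ^ k * (x * (x - 1))) := by ring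
    _ ≤ 4 * (x ^ k * x ^ 2) := by gcongr; nlinarith
    _ = 4 * x ^ (k + 2) := by ring

lemma tsum_one_div_add_two_pow_le {n : ℕ} (hn : 2 ≤ n) :
    ∑' m : ℕ, 1 / ((m + 2 : ℕ) : ℝ) ^ n ≤ 4 / 2 ^ n := by
  refine Real.tsum_le_of_sum_range_le (fun _ => by positivity) fun N => ?_
  calc ∑ m ∈ range N, 1 / ((m + 2 : ℕ) : ℝ) ^ n
      ≤ ∑ m ∈ range N, 4 / 2 ^ n * (1 / ((m + 1 : ℕ) : ℝ) - 1 / ((m + 1 + 1 : ℕ) : ℝ)) := by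
        gcongr with m
        have key := one_div_pow_le_mul_sub_one_div hn (x := ((m + 2 : ℕ) : ℝ)) (by simp)
        rw [show ((m + 2 : ℕ) : ℝ) - 1 = ((m + 1 : ℕ) : ℝ) by push_cast; ring] at key
        exact key
    _ = 4 / 2 ^ n * (1 - 1 / ((N + 1 : ℕ) : ℝ)) := by
        rw [← mul_sum, sum_range_sub' (fun m => 1 / ((m + 1 : ℕ) : ℝ))]
        simp
    _ ≤ 4 / 2 ^ n := mul_le_of_le_one_right (by positivity) (by simp; positivity)

lemma tsum_one_div_succ_pow_eq_one_add {n : ℕ} (hn : 2 ≤ n) :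
    ∑' m : ℕ, 1 / ((m + 1 : ℕ) : ℝ) ^ n = 1 + ∑' m : ℕ, 1 / ((m + 2 : ℕ) : ℝ) ^ n := by
  have hsum := (summable_nat_add_iff 1).mpr (Real.summable_one_div_nat_pow.mpr hn)
  rw [hsum.tsum_eq_zero_add]
  norm_num [add_assoc]

lemma one_lt_tsum_one_div_succ_pow {n : ℕ} (hn : 2 ≤ n) :
    1 < ∑' m : ℕ, 1 / ((m + 1 : ℕ) : ℝ) ^ n := by
  have hsum := (summable_nat_add_iff 2).mpr (Real.summable_one_div_nat_pow.mpr hn)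
  rw [tsum_one_div_succ_pow_eq_one_add hn, lt_add_iff_pos_right]
  exact hsum.tsum_pos (fun _ => by positivity) 0 (by positivity)

lemma one_div_le_div_sub_one {p q : ℕ} (hq : 0 < q) (h : 1 < (p : ℝ) / q) :
    1 / (q : ℝ) ≤ p / q - 1 := by
  have hqp : q < p := by exact_mod_cast (one_lt_div (by positivity)).mp h
  rw [le_sub_iff_add_le, div_add_one (by positivity), div_le_div_iff_of_pos_right (by positivity)]
  rw [add_comm]; exact_mod_cast hqp

lemma two_pow_le_four_mul_of_tsum_eq_div {n p q : ℕ} (hn : 2 ≤ n) (hq : 0 < q)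
    (h : ∑' m : ℕ, 1 / ((m + 1 : ℕ) : ℝ) ^ n = p / q) : 2 ^ n ≤ 4 * q := by
  have h1 : 1 / (q : ℝ) ≤ 4 / 2 ^ n := calc
    1 / (q : ℝ) ≤ p / q - 1 := one_div_le_div_sub_one hq (h ▸ one_lt_tsum_one_div_succ_pow hn)
    _ = ∑' m : ℕ, 1 / ((m + 2 : ℕ) : ℝ) ^ n := by
      rw [← h, tsum_one_div_succ_pow_eq_one_add hn, add_sub_cancel_left]
    _ ≤ 4 / 2 ^ n := tsum_one_div_add_two_pow_le hn
  rw [div_le_div_iff₀ (by positivity) (by positivity)] at h1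
  exact_mod_cast (by linarith : (2 : ℝ) ^ n ≤ 4 * q)

lemma le_of_two_pow_succ_le_four_mul {m q : ℕ} (h : 2 ^ (m + 1) ≤ 4 * q) : m ≤ q := by
  cases m with
  | zero => exact Nat.zero_le q
  | succ j =>
    have := j.lt_two_pow_self
    rw [pow_succ, pow_succ] at h
    omega

lemma log_two_sub_mem_Ioo {ε : ℝ} (hε : ε ∈ Set.Ioo (0 : ℝ) 1) :
    Real.log (2 - ε) ∈ Set.Ioo 0 1 := by
  obtain ⟨hε₀, hε₁⟩ := hε
  refine ⟨Real.log_pos (by linarith), ?_⟩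
  rw [Real.log_lt_iff_lt_exp (by linarith)]
  linarith [Real.add_one_lt_exp (one_ne_zero (α := ℝ))]

theorem zeta_arith_prog_max_denominator_general (a b R : ℕ) (ha : 0 < a) (hb : 0 < b)
    (p q : ℕ → ℕ)
    (hpq : ∀ k ≥ R, 0 < p k ∧ 0 < q k ∧ Nat.Coprime (p k) (q k) ∧
      zetaAP a b k = (p k : ℝ) / (q k : ℝ)) :
    ∀ ε ∈ Set.Ioo (0 : ℝ) 1, ∃ M₀ : ℕ, ∀ m ≥ M₀,
      ∃ k, R ≤ k ∧ k ≤ m ∧ (m : ℝ) * Real.log (2 - ε) < (q k : ℝ) := by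
  intro ε hε
  refine ⟨max R 1, fun m hm => ⟨m, le_of_max_le_left hm, le_rfl, ?_⟩⟩
  obtain ⟨-, hq, -, hζ⟩ := hpq m (le_of_max_le_left hm)
  have hm1 : 1 ≤ m := le_of_max_le_right hm
  have hmq : m ≤ q m := le_of_two_pow_succ_le_four_mul <|
    (Nat.pow_le_pow_right two_pos (by nlinarith)).trans
      (two_pow_le_four_mul_of_tsum_eq_div (by nlinarith) hq hζ)
  obtain ⟨hlog₀, hlog₁⟩ := log_two_sub_mem_Ioo hε
  calc (m : ℝ) * Real.log (2 - ε) ≤ q m * Real.log (2 - ε) := by gcongr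
    _ < q m := mul_lt_of_lt_one_right (by exact_mod_cast hq) hlog₁

theorem zeta_arith_prog_max_denominator (a b R : ℕ) (ha : 0 < a) (hb : 0 < b)
    (hconv : ∀ k ≥ R, 2 ≤ a * k + b)
    (p q : ℕ → ℕ)
    (hpq : ∀ k ≥ R, 0 < p k ∧ 0 < q k ∧ Nat.Coprime (p k) (q k) ∧
      zetaAP a b k = (p k : ℝ) / (q k : ℝ)) :
    ∀ ε ∈ Set.Ioo (0 : ℝ) 1, ∃ M₀ : ℕ, ∀ m ≥ M₀,
      ∃ k, R ≤ k ∧ k ≤ m ∧ (m : ℝ) * Real.log (2 - ε) < (q k : ℝ) :=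
  zeta_arith_prog_max_denominator_general a b R ha hb p q hpq
end

section
/- Let {h(k)}_{k≥2} be positive reals with H_n^{(r)}[h] > 0 for all n ≥ 1 and r ≥ K−2 (K ≥ 2 an integer). Then for all n ≥ 2 and r ≥ K−2, H_{n+1}^{(r)}[h] < H_n^{(r)}[h] · H_2^{(r+2(n−1))}[h] / H_1^{(r+2(n−1))}[h]. -/
/-!
Let `A` be the `n × n` Hankel matrix at offset `r` and `v` the column bordering it inside the
`(n+1) × (n+1)` one. The Schur complement gives `H_{n+1}^{(r)} = H_n^{(r)} (h(2n+2+r) - vᵀA⁻¹v)`,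
while the right-hand side equals `H_n^{(r)} (h(2n+2+r) - h(2n+1+r)² / h(2n+r))`. With `e` the last
unit vector, `h(2n+1+r) = v ⬝ e` and `h(2n+r) = eᵀAe`, so the claim is the Cauchy–Schwarz inequality
`(v ⬝ e)² < (vᵀA⁻¹v)(eᵀAe)` for the inner product defined by `A`, which is positive definite by
Sylvester's criterion. It is strict because `v` and `Ae` are two rows of the nonsingular Hankel
matrix at offset `r + 1`.
-/

/-- Hankel determinant of size `n` at offset `r`: `det_{1≤i,j≤n} (h (i+j+r))`. -/
noncomputable def hankel (h : ℕ → ℝ) (n r : ℕ) : ℝ :=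
  Matrix.det (Matrix.of fun i j : Fin n => h ((i : ℕ) + (j : ℕ) + 2 + r))

open Matrix

namespace Matrix

theorem PosDef.fromBlocks₁₁_of_schur {m n R : Type*} [Fintype m] [Fintype n] [DecidableEq m]
    [CommRing R] [PartialOrder R] [StarRing R] [StarOrderedRing R]
    {A : Matrix m m R} (B : Matrix m n R) (D : Matrix n n R)
    (hA : A.PosDef) [Invertible A] (hS : (D - Bᴴ * A⁻¹ * B).PosDef) :
    (fromBlocks A B Bᴴ D).PosDef := by
  refine .of_dotProduct_mulVec_pos ((IsHermitian.fromBlocks₁₁ B D hA.1).mpr hS.1) fun x hx => ?_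
  rw [dotProduct_mulVec, ← Sum.elim_comp_inl_inr x, schur_complement_eq₁₁ B D _ _ hA.1,
    ← dotProduct_mulVec, ← dotProduct_mulVec]
  by_cases hx₂ : x ∘ Sum.inr = 0
  · have hx₁ : x ∘ Sum.inl ≠ 0 := fun hx₁ => hx <| by
      ext (i | i)
      exacts [congrFun hx₁ i, congrFun hx₂ i]
    simpa [hx₂] using hA.dotProduct_mulVec_pos hx₁
  · exact add_pos_of_nonneg_of_pos (hA.posSemidef.dotProduct_mulVec_nonneg _)
      (hS.dotProduct_mulVec_pos hx₂)

theorem det_fromBlocks_replicateCol_replicateRow {m ι R : Type*} [Fintype m] [DecidableEq m]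
    [Unique ι] [DecidableEq ι] [CommRing R] (A : Matrix m m R) [Invertible A] (b c : m → R)
    (d : R) :
    (fromBlocks A (replicateCol ι b) (replicateRow ι c) (of fun _ _ => d)).det
      = A.det * (d - c ⬝ᵥ A⁻¹ *ᵥ b) := by
  rw [det_fromBlocks₁₁, invOf_eq_nonsing_inv, Matrix.mul_assoc, ← replicateCol_mulVec,
    det_unique (n := ι)]
  rfl

theorem submatrix_finSumFinEquiv_eq_fromBlocks {α : Type*} {k : ℕ}
    (M : Matrix (Fin (k + 1)) (Fin (k + 1)) α) :
    M.submatrix finSumFinEquiv finSumFinEquiv =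
      fromBlocks (M.submatrix Fin.castSucc Fin.castSucc)
        (replicateCol (Fin 1) fun i => M i.castSucc (Fin.last k))
        (replicateRow (Fin 1) fun j => M (Fin.last k) j.castSucc)
        (of fun _ _ => M (Fin.last k) (Fin.last k)) := by
  ext (i | i) (j | j) <;> simp [Fin.fin_one_eq_zero] <;> rfl

theorem det_succ_eq_det_submatrix_castSucc_mul {R : Type*} [CommRing R] {k : ℕ}
    (M : Matrix (Fin (k + 1)) (Fin (k + 1)) R)
    [Invertible (M.submatrix Fin.castSucc Fin.castSucc)] :
    M.det = (M.submatrix Fin.castSucc Fin.castSucc).det *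
      (M (Fin.last k) (Fin.last k) - (fun j => M (Fin.last k) j.castSucc) ⬝ᵥ
        (M.submatrix Fin.castSucc Fin.castSucc)⁻¹ *ᵥ fun i => M i.castSucc (Fin.last k)) := by
  rw [← det_submatrix_equiv_self finSumFinEquiv, submatrix_finSumFinEquiv_eq_fromBlocks]
  exact det_fromBlocks_replicateCol_replicateRow _ _ _ _

theorem posDef_of_unique {ι : Type*} [Fintype ι] [Unique ι] {S : Matrix ι ι ℝ}
    (hS : 0 < S default default) : S.PosDef := by
  refine .of_dotProduct_mulVec_pos (by ext i j; simp [Subsingleton.elim i j]) fun x hx => ?_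
  have hx₀ : x default ≠ 0 := fun h => hx <| funext fun i => by rwa [Subsingleton.elim i default]
  simp only [dotProduct, mulVec, Fintype.sum_unique, star_trivial]
  nlinarith [mul_self_pos.mpr hx₀]

/-- Sylvester's criterion. -/
theorem posDef_of_forall_det_submatrix_castLE_pos :
    ∀ {k : ℕ} (M : Matrix (Fin k) (Fin k) ℝ), M.IsHermitian →
      (∀ j (hj : j ≤ k), 0 < (M.submatrix (Fin.castLE hj) (Fin.castLE hj)).det) → M.PosDef
  | 0, M, hM, _ => .of_dotProduct_mulVec_pos hM fun x hx => (hx (Subsingleton.elim x 0)).elim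
  | k + 1, M, hM, hdet => by
    set A := M.submatrix Fin.castSucc Fin.castSucc
    set b : Fin k → ℝ := fun i => M i.castSucc (Fin.last k)
    have hA : A.PosDef := posDef_of_forall_det_submatrix_castLE_pos A (hM.submatrix _)
      fun j hj => hdet j (hj.trans k.le_succ)
    have : Invertible A := hA.isUnit.invertible
    have hrow : (fun j => M (Fin.last k) j.castSucc) = star b :=
      funext fun j => (hM.apply _ _).symm
    have hblocks := M.submatrix_finSumFinEquiv_eq_fromBlocks
    rw [hrow, ← conjTranspose_replicateCol] at hblocks
    have hschur : 0 < M (Fin.last k) (Fin.last k) - star b ⬝ᵥ A⁻¹ *ᵥ b := by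
      have hMdet : 0 < M.det := by simpa using hdet (k + 1) le_rfl
      rw [det_succ_eq_det_submatrix_castSucc_mul, hrow] at hMdet
      exact pos_of_mul_pos_right hMdet hA.det_pos.le
    have hN := PosDef.fromBlocks₁₁_of_schur (replicateCol (Fin 1) b)
      (of fun _ _ => M (Fin.last k) (Fin.last k)) hA <| posDef_of_unique <| by
        rw [sub_apply, conjTranspose_replicateCol, Matrix.mul_assoc, ← replicateCol_mulVec,
          replicateRow_mul_replicateCol_apply]
        exact hschur
    rw [← hblocks] at hN
    simpa using hN.submatrix finSumFinEquiv.symm.injective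

/-- Strict Cauchy–Schwarz for `⟪u, w⟫ = u ⬝ᵥ A *ᵥ w`, applied to `A⁻¹ *ᵥ x` and `y`. -/
theorem PosDef.sq_dotProduct_lt {m : Type*} [Fintype m] [DecidableEq m] {A : Matrix m m ℝ}
    (hA : A.PosDef) {x y : m → ℝ} (hxy : LinearIndependent ℝ ![x, A *ᵥ y]) :
    (x ⬝ᵥ y) ^ 2 < (x ⬝ᵥ A⁻¹ *ᵥ x) * (y ⬝ᵥ A *ᵥ y) := by
  have hdet : IsUnit A.det := isUnit_iff_ne_zero.mpr hA.det_pos.ne'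
  have hsymm : ∀ u w : m → ℝ, u ⬝ᵥ A *ᵥ w = A *ᵥ u ⬝ᵥ w := fun u w => by
    rw [dotProduct_mulVec, ← mulVec_transpose, ← conjTranspose_eq_transpose_of_trivial, hA.1]
  have hy : y ≠ 0 := by
    rintro rfl
    simpa using hxy.ne_zero 1
  have hα : 0 < y ⬝ᵥ A *ᵥ y := by simpa using hA.dotProduct_mulVec_pos hy
  set c := (x ⬝ᵥ y) / (y ⬝ᵥ A *ᵥ y)
  set u := A⁻¹ *ᵥ x
  have hAu : A *ᵥ u = x := by rw [mulVec_mulVec, mul_nonsing_inv _ hdet, one_mulVec]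
  have hz : u - c • y ≠ 0 := fun hz => by
    have := (LinearIndependent.pair_iff.mp hxy) 1 (-c)
      (by rw [← hAu, sub_eq_zero.mp hz, mulVec_smul]; simp)
    exact one_ne_zero this.1
  have hpos := hA.dotProduct_mulVec_pos hz
  rw [star_trivial, mulVec_sub, mulVec_smul, hAu, sub_dotProduct, dotProduct_sub, dotProduct_sub,
    smul_dotProduct, dotProduct_smul, dotProduct_smul, hsymm u, hAu, smul_dotProduct,
    dotProduct_comm u x] at hpos
  have hcα : c * (y ⬝ᵥ A *ᵥ y) = x ⬝ᵥ y := div_mul_cancel₀ _ hα.ne'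
  simp only [smul_eq_mul, dotProduct_comm y x, hcα] at hpos
  rw [sub_self, sub_zero] at hpos
  calc (x ⬝ᵥ y) ^ 2 = c * (y ⬝ᵥ A *ᵥ y) * (x ⬝ᵥ y) := by rw [hcα]; ring
    _ < x ⬝ᵥ u * (y ⬝ᵥ A *ᵥ y) := by nlinarith [mul_pos hpos hα]

theorem linearIndependent_pair_rows_of_det_ne_zero {m K : Type*} [Fintype m] [DecidableEq m]
    [CommRing K] [IsDomain K] {A : Matrix m m K} (hA : A.det ≠ 0) {i j : m} (hij : i ≠ j) :
    LinearIndependent K ![A i, A j] := by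
  have hinj : Function.Injective ![i, j] := by simpa [Fin.cons_injective_iff] using hij
  convert (linearIndependent_rows_of_det_ne_zero hA).comp _ hinj using 1
  ext a : 1
  fin_cases a <;> rfl

end Matrix

section Hankel

variable (h : ℕ → ℝ)

def hankelMatrix (n r : ℕ) : Matrix (Fin n) (Fin n) ℝ :=
  of fun i j => h (i + j + 2 + r)

def hankelBorder (n r : ℕ) : Fin n → ℝ := fun i => h (i + n + 2 + r)

theorem hankel_eq_det (n r : ℕ) : hankel h n r = (hankelMatrix h n r).det := rfl

theorem hankel_one (s : ℕ) : hankel h 1 s = h (s + 2) := by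
  simp [hankel_eq_det, hankelMatrix, add_comm]

theorem hankel_two (s : ℕ) : hankel h 2 s = h (s + 2) * h (s + 4) - h (s + 3) ^ 2 := by
  rw [hankel_eq_det, det_fin_two]
  simp only [hankelMatrix, of_apply, Fin.val_zero, Fin.val_one]
  ring_nf

theorem hankelMatrix_isHermitian (n r : ℕ) : (hankelMatrix h n r).IsHermitian := by
  ext i j
  exact congrArg h (by omega)

theorem posDef_hankelMatrix {r : ℕ} (hH : ∀ n ≥ 1, 0 < hankel h n r) (n : ℕ) :
    (hankelMatrix h n r).PosDef := by
  refine posDef_of_forall_det_submatrix_castLE_pos _ (hankelMatrix_isHermitian h n r)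
    fun j hj => ?_
  rcases j.eq_zero_or_pos with rfl | hj₀
  · simp
  · exact hH j hj₀

theorem hankel_succ (n r : ℕ) [Invertible (hankelMatrix h n r)] :
    hankel h (n + 1) r = hankel h n r *
      (h (2 * n + 2 + r) - hankelBorder h n r ⬝ᵥ (hankelMatrix h n r)⁻¹ *ᵥ hankelBorder h n r) := by
  have hsub : (hankelMatrix h (n + 1) r).submatrix Fin.castSucc Fin.castSucc =
      hankelMatrix h n r := rfl
  have : Invertible ((hankelMatrix h (n + 1) r).submatrix Fin.castSucc Fin.castSucc) :=
    hsub ▸ inferInstance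
  rw [hankel_eq_det, det_succ_eq_det_submatrix_castSucc_mul, hsub]
  have hrow : (fun j : Fin n => hankelMatrix h (n + 1) r (Fin.last n) j.castSucc) =
      hankelBorder h n r :=
    funext fun j => congrArg h (by simp only [Fin.val_last, Fin.val_castSucc]; omega)
  rw [hrow]
  congr 3
  exact congrArg h (by simp only [Fin.val_last]; omega)

theorem sq_lt_dotProduct_hankelBorder_mul {n r : ℕ} (hA : (hankelMatrix h (n + 2) r).PosDef)
    (hdet : hankel h (n + 2) (r + 1) ≠ 0) :
    h (2 * n + 5 + r) ^ 2 < (hankelBorder h (n + 2) r ⬝ᵥ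
      (hankelMatrix h (n + 2) r)⁻¹ *ᵥ hankelBorder h (n + 2) r) * h (2 * n + 4 + r) := by
  set e : Fin (n + 2) → ℝ := Pi.single (Fin.last (n + 1)) 1
  have hrows := linearIndependent_pair_rows_of_det_ne_zero (A := hankelMatrix h (n + 2) (r + 1))
    hdet (i := Fin.last (n + 1)) (j := (Fin.last n).castSucc) (by simp [Fin.ext_iff])
  have hAe :
      hankelMatrix h (n + 2) r *ᵥ e = hankelMatrix h (n + 2) (r + 1) (Fin.last n).castSucc := by
    ext j
    simp only [e, hankelMatrix, mulVec_single, Pi.smul_apply, col_apply, of_apply,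
      MulOpposite.op_one, one_smul, Fin.val_last, Fin.val_castSucc]
    exact congrArg h (by omega)
  have hv : hankelBorder h (n + 2) r = hankelMatrix h (n + 2) (r + 1) (Fin.last (n + 1)) := by
    ext j
    exact congrArg h (by simp only [Fin.val_last]; omega)
  have hCS := hA.sq_dotProduct_lt (x := hankelBorder h (n + 2) r) (y := e)
    (by rw [hAe, hv]; exact hrows)
  convert hCS using 2
  · simp only [e, hankelBorder, dotProduct_single, mul_one]
    exact congrArg h (by simp only [Fin.val_last]; omega)
  · rw [hAe]
    simp only [e, hankelMatrix, single_dotProduct, of_apply, one_mul]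
    exact congrArg h (by simp only [Fin.val_last, Fin.val_castSucc]; omega)

end Hankel

theorem hankel_ratio_telescoped_general (h : ℕ → ℝ) (K : ℕ)
    (hHpos : ∀ n ≥ 1, ∀ r ≥ K - 2, 0 < hankel h n r) :
    ∀ n ≥ 2, ∀ r ≥ K - 2,
      hankel h (n + 1) r <
        hankel h n r * hankel h 2 (r + 2 * (n - 1)) / hankel h 1 (r + 2 * (n - 1)) := by
  intro n hn r hr
  obtain ⟨k, rfl⟩ : ∃ k, n = k + 2 := ⟨n - 2, by omega⟩
  have hA := posDef_hankelMatrix h (fun n hn => hHpos n hn r hr) (k + 2)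
  have := hA.isUnit.invertible
  have hCS :=
    sq_lt_dotProduct_hankelBorder_mul h hA (hHpos _ (by omega) (r + 1) (by omega)).ne'
  have hα := hHpos 1 le_rfl (r + 2 * (k + 2 - 1)) (by omega)
  have hH := hHpos (k + 2) (by omega) r hr
  rw [hankel_one] at hα ⊢
  rw [hankel_succ, hankel_two, lt_div_iff₀ hα]
  obtain ⟨e₂, e₃, e₄⟩ : r + 2 * (k + 2 - 1) + 2 = 2 * k + 4 + r ∧
      r + 2 * (k + 2 - 1) + 3 = 2 * k + 5 + r ∧
      r + 2 * (k + 2 - 1) + 4 = 2 * (k + 2) + 2 + r := by omega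
  rw [e₂, e₃, e₄]
  nlinarith [mul_lt_mul_of_pos_left hCS hH]

theorem hankel_ratio_telescoped (h : ℕ → ℝ) (K : ℕ) (hK : 2 ≤ K)
    (hpos : ∀ k ≥ 2, 0 < h k)
    (hHpos : ∀ n ≥ 1, ∀ r ≥ K - 2, 0 < hankel h n r) :
    ∀ n ≥ 2, ∀ r ≥ K - 2,
      hankel h (n + 1) r <
        hankel h n r * hankel h 2 (r + 2 * (n - 1)) / hankel h 1 (r + 2 * (n - 1)) :=
  hankel_ratio_telescoped_general h K hHpos
end
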